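/- arXiv:0908.0153 — 2 statements merged into one kernel-verified Lean document; each statement's English description precedes it below -/
import Mathlib

section
/- Let n = 2k+1 be an odd integer (k ≥ 0), and consider the 2×2 integer matrices P = [[n,1],[1,0]], G = [[3,2],[−2,−1]], Q = [[−(n+1),1],[1,0]], R = [[1,0],[0,−1]]. Then L·G^k·Q·R = −P³, where L = [[n+1,1],[1,0]]. Equivalently, as an identity of continued fractions: [n, n, n, z] = [n+1, −2, 2, …, −2, 2, −(n+1), −z] (with k pairs −2, 2) for all z. -/
set_option linter.unusedTactic false in
lemma G_pow_formula (k : ℕ) :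
    (!![3, 2; -2, -1] : Matrix (Fin 2) (Fin 2) ℤ) ^ k =
      !![2 * (k : ℤ) + 1, 2 * k; -(2 * k), 1 - 2 * k] := by
  induction k with
  | zero => simp [Matrix.one_fin_two]
  | succ m ih =>
      rw [pow_succ, ih]
      ext i j
      fin_cases i <;> fin_cases j <;>
        simp [Matrix.mul_apply, Fin.sum_univ_succ] <;> push_cast <;> ring

/-- for an odd integer `n = 2k+1` and the matrices
`P = [[n,1],[1,0]]`, `G = [[3,2],[-2,-1]]`, `L = [[n+1,1],[1,0]]`,
`Q = [[-(n+1),1],[1,0]]`, `R = [[1,0],[0,-1]]`, one has `L·G^k·Q·R = -P³`;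
i.e. the continued fraction identity
`[n, n, n, z] = [n+1, -2, 2, …, -2, 2, -(n+1), -z]` (with `k` pairs `-2, 2`). -/
theorem L_G_pow_Q_R_eq_neg_P_cube (k : ℕ) (n : ℤ) (hn : n = 2 * k + 1) :
    (!![n + 1, 1; 1, 0] : Matrix (Fin 2) (Fin 2) ℤ) *
        (!![3, 2; -2, -1] : Matrix (Fin 2) (Fin 2) ℤ) ^ k *
        (!![-(n + 1), 1; 1, 0] : Matrix (Fin 2) (Fin 2) ℤ) *
        (!![1, 0; 0, -1] : Matrix (Fin 2) (Fin 2) ℤ) =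
      -((!![n, 1; 1, 0] : Matrix (Fin 2) (Fin 2) ℤ) ^ 3) := by
  subst hn
  rw [G_pow_formula]
  ext i j
  fin_cases i <;> fin_cases j <;>
    simp [pow_succ, Matrix.mul_apply, Fin.sum_univ_succ] <;> ring
end

section
/- Let n = 2k+1 be an odd integer (k ≥ 0), and set G = [[3,2],[−2,−1]], Q = [[−(n+1),1],[1,0]], R = [[1,0],[0,−1]], P = [[n,1],[1,0]], and H = G^k·Q²·R (all 2×2 integer matrices). Then H = [[n³+n²+2n+1, n²+1],[−n³−n, n−n²−1]], and [[1,0],[1,1]] · H · [[1,0],[−1,1]] = P³; equivalently S·P³ = H·S where S = [[1,0],[−1,1]]. Consequently, with s(x) = x/(1−x), one has s([n,n,n,x]) = [−2,2,…,−2,2,−(n+1),−(n+1),−s(x)] (with k pairs −2, 2) for all x. -/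
lemma G_pow (k : ℕ) : (!![3, 2; -2, -1] : Matrix (Fin 2) (Fin 2) ℤ) ^ k =
    !![2 * (k:ℤ) + 1, 2 * k; -(2 * k), 1 - 2 * k] := by
  induction k with
  | zero => simp [Matrix.one_fin_two]
  | succ m ih =>
      rw [pow_succ, ih]
      push_cast
      ext i j
      fin_cases i <;> fin_cases j <;>
        simp [Matrix.mul_apply, Fin.sum_univ_succ] <;> ring

/-- for an odd integer `n = 2k+1` with `G = [[3,2],[-2,-1]]`,
`Q = [[-(n+1),1],[1,0]]`, `R = [[1,0],[0,-1]]`, `P = [[n,1],[1,0]]`,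
`S = [[1,0],[-1,1]]`, and `H = G^k·Q²·R`:
`H = [[n³+n²+2n+1, n²+1],[-n³-n, n-n²-1]]`,
`[[1,0],[1,1]]·H·[[1,0],[-1,1]] = P³` and `S·P³ = H·S`.
Consequently, with `s(x) = x/(1-x)`,
`s([n,n,n,x]) = [-2,2,…,-2,2,-(n+1),-(n+1),-s(x)]` (with `k` pairs `-2, 2`). -/
theorem H_conjugate_eq_P_cube (k : ℕ) (n : ℤ) (hn : n = 2 * k + 1)
    (H : Matrix (Fin 2) (Fin 2) ℤ)
    (hH : H = (!![3, 2; -2, -1] : Matrix (Fin 2) (Fin 2) ℤ) ^ k *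
        (!![-(n + 1), 1; 1, 0] : Matrix (Fin 2) (Fin 2) ℤ) ^ 2 *
        (!![1, 0; 0, -1] : Matrix (Fin 2) (Fin 2) ℤ)) :
    H = !![n ^ 3 + n ^ 2 + 2 * n + 1, n ^ 2 + 1; -n ^ 3 - n, n - n ^ 2 - 1] ∧
      (!![1, 0; 1, 1] : Matrix (Fin 2) (Fin 2) ℤ) * H *
          (!![1, 0; -1, 1] : Matrix (Fin 2) (Fin 2) ℤ) =
        (!![n, 1; 1, 0] : Matrix (Fin 2) (Fin 2) ℤ) ^ 3 ∧
      (!![1, 0; -1, 1] : Matrix (Fin 2) (Fin 2) ℤ) *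
          (!![n, 1; 1, 0] : Matrix (Fin 2) (Fin 2) ℤ) ^ 3 =
        H * (!![1, 0; -1, 1] : Matrix (Fin 2) (Fin 2) ℤ) := by
  subst hn
  rw [G_pow] at hH
  have h1 : H = !![(2*(k:ℤ)+1) ^ 3 + (2*(k:ℤ)+1) ^ 2 + 2 * (2*(k:ℤ)+1) + 1, (2*(k:ℤ)+1) ^ 2 + 1; -(2*(k:ℤ)+1) ^ 3 - (2*(k:ℤ)+1), (2*(k:ℤ)+1) - (2*(k:ℤ)+1) ^ 2 - 1] := by
    rw [hH, pow_two]
    ext i j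
    fin_cases i <;> fin_cases j <;>
      simp [Matrix.mul_apply, Fin.sum_univ_succ] <;> push_cast <;> ring
  refine ⟨h1, ?_, ?_⟩ <;> rw [h1] <;>
    ext i j <;> fin_cases i <;> fin_cases j <;>
      simp [pow_succ, Matrix.mul_apply, Fin.sum_univ_succ] <;> ring
end
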